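/- Let p, b, c, r, s be complex numbers and let x > 0 be real. Assume Re(s) > 0 and Re(p + r + 1) > 0. Then the Euler (beta) transform of the generalized Struve function satisfies ∫₀¹ z^{r−1} (1−z)^{s−1} · H_{p,b,c}(√x · z) dz = (√x/2)^{p+1} · Γ(s) · Σ_{k=0}^{∞} Γ(p+r+1+2k) / ( Γ(k + 3/2) · Γ(k + p + (b+2)/2) · Γ(p+r+s+1+2k) ) · (−c·x/4)^k, where both the integral and the series converge. -/

import Mathlib

/-!
On `(0, 1]` the power series of `H_{p,b,c}(√x z)` turns the integrand into
`(√x/2)^(p+1) ∑ₖ eₖ z^(p+r+2k) (1-z)^(s-1)` with `eₖ = (-cx/4)^k / (Γ(k+3/2) Γ(k+p+(b+2)/2))`.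
Raising the exponent of `z ∈ (0, 1]` only shrinks the modulus, so every term is dominated by
`|eₖ|` times the integrable `k = 0` Beta integrand, and `∑ |eₖ| < ∞` by the ratio test (the ratio
of consecutive terms decays like `|cx/4| / k²`). Dominated convergence then allows termwise
integration, and the `k`-th Beta integral is `Γ(p+r+1+2k) Γ(s) / Γ(p+r+s+1+2k)`.
-/

open MeasureTheory Set

/-- `Complex.Gamma` vanishes at the poles of `Γ`, so division by it implements the
reciprocal Gamma convention. -/
noncomputable def struveH (p b c z : ℂ) : ℂ :=
  ∑' k : ℕ, (-c) ^ k /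
      (Complex.Gamma ((k : ℂ) + 3 / 2) * Complex.Gamma ((k : ℂ) + p + (b + 2) / 2)) *
    (z / 2) ^ (2 * (k : ℂ) + p + 1)

section DominatedSeries

variable {α E : Type*} [MeasurableSpace α] {μ : Measure α} [NormedAddCommGroup E]
  {F : ℕ → α → E} {c : ℕ → ℝ} {g : α → ℝ}

theorem ae_hasSum_tsum_of_norm_le_mul [CompleteSpace E] (hc : Summable c)
    (hbound : ∀ k, ∀ᵐ a ∂μ, ‖F k a‖ ≤ c k * g a) :
    ∀ᵐ a ∂μ, HasSum (fun k => F k a) (∑' k, F k a) := by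
  filter_upwards [ae_all_iff.2 hbound] with a ha
  exact (Summable.of_norm_bounded (hc.mul_right (g a)) ha).hasSum

theorem integrable_tsum_of_norm_le_mul [CompleteSpace E] (hF : ∀ k, AEStronglyMeasurable (F k) μ)
    (hc : Summable c) (hg : Integrable g μ) (hbound : ∀ k, ∀ᵐ a ∂μ, ‖F k a‖ ≤ c k * g a) :
    Integrable (fun a => ∑' k, F k a) μ := by
  have hsum := ae_hasSum_tsum_of_norm_le_mul hc hbound
  have hmeas : AEStronglyMeasurable (fun a => ∑' k, F k a) μ :=
    aestronglyMeasurable_of_tendsto_ae Filter.atTop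
      (fun n => Finset.aestronglyMeasurable_fun_sum _ fun k _ => hF k)
      (by filter_upwards [hsum] with a ha using ha.tendsto_sum_nat)
  refine (hg.const_mul (∑' k, c k)).mono' hmeas ?_
  filter_upwards [hsum, ae_all_iff.2 hbound] with a ha hba
  rw [← tsum_mul_right]
  exact ha.norm_le_of_bounded (hc.mul_right (g a)).hasSum hba

theorem hasSum_integral_tsum_of_norm_le_mul [NormedSpace ℝ E] [CompleteSpace E]
    (hF : ∀ k, AEStronglyMeasurable (F k) μ) (hc : Summable c) (hg : Integrable g μ)
    (hbound : ∀ k, ∀ᵐ a ∂μ, ‖F k a‖ ≤ c k * g a) :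
    HasSum (fun k => ∫ a, F k a ∂μ) (∫ a, ∑' k, F k a ∂μ) :=
  hasSum_integral_of_dominated_convergence (fun k a => c k * g a) hF hbound
    (ae_of_all _ fun a => hc.mul_right (g a))
    (by simpa only [tsum_mul_right] using hg.const_mul (∑' k, c k))
    (ae_hasSum_tsum_of_norm_le_mul hc hbound)

end DominatedSeries

section Beta

open Complex

noncomputable def betaIntegrand (u v : ℂ) (z : ℝ) : ℂ :=
  (z : ℂ) ^ (u - 1) * (1 - (z : ℂ)) ^ (v - 1)

variable {u v : ℂ}

theorem integrableOn_betaIntegrand (hu : 0 < u.re) (hv : 0 < v.re) :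
    IntegrableOn (betaIntegrand u v) (Ioc 0 1) :=
  (intervalIntegrable_iff_integrableOn_Ioc_of_le zero_le_one).1 (betaIntegral_convergent hu hv)

theorem setIntegral_betaIntegrand (hu : 0 < u.re) (hv : 0 < v.re) :
    ∫ z in Ioc 0 1, betaIntegrand u v z = Gamma u * Gamma v / Gamma (u + v) := by
  rw [← betaIntegral_eq_Gamma_mul_div u v hu hv, betaIntegral,
    intervalIntegral.integral_of_le zero_le_one]
  rfl

theorem norm_betaIntegrand_add_le {t : ℝ} (ht : 0 ≤ t) {z : ℝ} (hz : z ∈ Ioc 0 1) :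
    ‖betaIntegrand (u + t) v z‖ ≤ ‖betaIntegrand u v z‖ := by
  simp only [betaIntegrand, norm_mul, norm_cpow_eq_rpow_re_of_pos hz.1]
  gcongr ?_ * _
  exact Real.rpow_le_rpow_of_exponent_ge hz.1 hz.2 (by simpa using ht)

theorem betaIntegrand_mul_cpow {z : ℝ} (hz : 0 < z) (w : ℂ) :
    betaIntegrand u v z * (z : ℂ) ^ w = betaIntegrand (u + w) v z := by
  rw [betaIntegrand, betaIntegrand, mul_right_comm, ← cpow_add _ _ (ofReal_ne_zero.2 hz.ne')]
  ring_nf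

theorem integrableOn_and_hasSum_integral_tsum_betaIntegrand (hu : 0 < u.re) (hv : 0 < v.re)
    {e : ℕ → ℂ} (he : Summable fun k => ‖e k‖) {t : ℕ → ℝ} (ht : ∀ k, 0 ≤ t k) :
    IntegrableOn (fun z => ∑' k, e k * betaIntegrand (u + t k) v z) (Ioc 0 1) ∧
      HasSum (fun k => e k * (Gamma (u + t k) * Gamma v / Gamma (u + t k + v)))
        (∫ z in Ioc 0 1, ∑' k, e k * betaIntegrand (u + t k) v z) := by
  have hu' (k : ℕ) : 0 < (u + t k).re := by simpa using add_pos_of_pos_of_nonneg hu (ht k)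
  have hint (k : ℕ) : IntegrableOn (fun z => e k * betaIntegrand (u + t k) v z) (Ioc 0 1) :=
    (integrableOn_betaIntegrand (hu' k) hv).const_mul (e k)
  have hbound (k : ℕ) : ∀ᵐ z ∂(volume.restrict (Ioc (0 : ℝ) 1)),
      ‖e k * betaIntegrand (u + t k) v z‖ ≤ ‖e k‖ * ‖betaIntegrand u v z‖ := by
    filter_upwards [ae_restrict_mem measurableSet_Ioc] with z hz
    rw [norm_mul]
    gcongr
    exact norm_betaIntegrand_add_le (ht k) hz
  have hg := (integrableOn_betaIntegrand hu hv).norm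
  refine ⟨integrable_tsum_of_norm_le_mul (fun k => (hint k).1) he hg hbound, ?_⟩
  have hval (k : ℕ) : ∫ z in Ioc 0 1, e k * betaIntegrand (u + t k) v z =
      e k * (Gamma (u + t k) * Gamma v / Gamma (u + t k + v)) := by
    rw [integral_const_mul, setIntegral_betaIntegrand (hu' k) hv]
  simpa only [hval] using hasSum_integral_tsum_of_norm_le_mul (fun k => (hint k).1) he hg hbound

end Beta

section Struve

open Complex

theorem Gamma_natCast_succ_add {k : ℕ} {a : ℂ} (h : (k : ℂ) + a ≠ 0) :
    Gamma ((k + 1 : ℕ) + a) = ((k : ℂ) + a) * Gamma (k + a) := by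
  rw [← Gamma_add_one _ h]
  push_cast
  ring_nf

theorem summable_norm_pow_div_Gamma_mul_Gamma (w a d : ℂ) :
    Summable fun k : ℕ => ‖w ^ k / (Gamma (k + a) * Gamma (k + d))‖ := by
  refine summable_of_ratio_norm_eventually_le (r := 1 / 2) (by norm_num) ?_
  have hk := tendsto_natCast_atTop_atTop (R := ℝ)
  filter_upwards [hk.eventually_ge_atTop (1 - a.re), hk.eventually_ge_atTop (2 * ‖w‖ + 1 - d.re)]
    with k hka hkd
  have hre (e : ℂ) : (k : ℝ) + e.re ≤ ‖(k : ℂ) + e‖ := by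
    simpa using re_le_norm ((k : ℂ) + e)
  have hna : 1 ≤ ‖(k : ℂ) + a‖ := by linarith [hre a]
  have hnd : 2 * ‖w‖ + 1 ≤ ‖(k : ℂ) + d‖ := by linarith [hre d]
  have hstep : w ^ (k + 1) / (Gamma ((k + 1 : ℕ) + a) * Gamma ((k + 1 : ℕ) + d)) =
      w / (((k : ℂ) + a) * ((k : ℂ) + d)) * (w ^ k / (Gamma (k + a) * Gamma (k + d))) := by
    rw [Gamma_natCast_succ_add (norm_pos_iff.1 (by linarith)),
      Gamma_natCast_succ_add (norm_pos_iff.1 (by linarith [norm_nonneg w])), pow_succ,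
      div_mul_div_comm]
    ring
  rw [norm_norm, norm_norm, hstep, norm_mul]
  gcongr
  rw [norm_div, norm_mul, div_le_iff₀ (mul_pos (by linarith) (by linarith [norm_nonneg w]))]
  nlinarith [norm_nonneg w]

theorem struveH_ofReal_mul (p b c : ℂ) {y z : ℝ} (hy : 0 < y) (hz : 0 ≤ z) :
    struveH p b c (y * z) = ((y : ℂ) / 2) ^ (p + 1) * ∑' k : ℕ,
      (-c * (y : ℂ) ^ 2 / 4) ^ k /
        (Gamma ((k : ℂ) + 3 / 2) * Gamma ((k : ℂ) + p + (b + 2) / 2)) *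
        (z : ℂ) ^ (2 * (k : ℂ) + p + 1) := by
  rw [struveH, ← tsum_mul_left]
  congr 1 with k
  have hsplit : (y : ℂ) * z / 2 = ((y / 2 : ℝ) : ℂ) * (z : ℂ) := by push_cast; ring
  have hy2 : ((y / 2 : ℝ) : ℂ) ≠ 0 := ofReal_ne_zero.2 (by positivity)
  rw [hsplit, mul_cpow_ofReal_nonneg (by positivity) hz,
    show 2 * (k : ℂ) + p + 1 = ((2 * k : ℕ) : ℂ) + (p + 1) by push_cast; ring,
    cpow_add _ _ hy2, cpow_natCast, pow_mul]
  have hcoeff : (-c * (y : ℂ) ^ 2 / 4) ^ k = (-c) ^ k * (((y / 2 : ℝ) : ℂ) ^ 2) ^ k := by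
    rw [← mul_pow]
    congr 1
    push_cast
    ring
  rw [hcoeff, ofReal_div, ofReal_ofNat]
  ring

theorem betaIntegrand_mul_struveH_sqrt_mul (p b c r s : ℂ) {x z : ℝ} (hx : 0 < x) (hz : 0 < z) :
    betaIntegrand r s z * struveH p b c (Real.sqrt x * z) =
      ((Real.sqrt x : ℂ) / 2) ^ (p + 1) * ∑' k : ℕ,
        (-c * x / 4) ^ k / (Gamma ((k : ℂ) + 3 / 2) * Gamma ((k : ℂ) + p + (b + 2) / 2)) *
          betaIntegrand (p + r + 1 + (2 * k : ℝ)) s z := by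
  have hsq : (Real.sqrt x : ℂ) ^ 2 = x := by
    rw [← ofReal_pow, Real.sq_sqrt hx.le]
  rw [struveH_ofReal_mul p b c (Real.sqrt_pos.2 hx) hz.le, hsq, mul_left_comm, ← tsum_mul_left]
  congr 2 with k
  rw [show p + r + 1 + ((2 * k : ℝ) : ℂ) = r + (2 * k + p + 1) by push_cast; ring,
    ← betaIntegrand_mul_cpow hz]
  ring

end Struve

/-- Euler (beta) transform of the generalized Struve function. -/
theorem euler_transform_struveH (p b c r s : ℂ) (x : ℝ) (hx : 0 < x)
    (hs : 0 < s.re) (hpr : 0 < (p + r + 1).re) :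
    IntegrableOn
      (fun z : ℝ => (z : ℂ) ^ (r - 1) * ((1 : ℂ) - z) ^ (s - 1) *
        struveH p b c ((Real.sqrt x : ℂ) * z)) (Ioc (0 : ℝ) 1) ∧
    Summable (fun k : ℕ =>
      Complex.Gamma (p + r + 1 + 2 * k) /
          (Complex.Gamma ((k : ℂ) + 3 / 2) * Complex.Gamma ((k : ℂ) + p + (b + 2) / 2) *
            Complex.Gamma (p + r + s + 1 + 2 * k)) *
        (-c * x / 4) ^ k) ∧
    ∫ z in Ioc (0 : ℝ) 1, (z : ℂ) ^ (r - 1) * ((1 : ℂ) - z) ^ (s - 1) *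
        struveH p b c ((Real.sqrt x : ℂ) * z) =
      ((Real.sqrt x : ℂ) / 2) ^ (p + 1) * Complex.Gamma s *
        ∑' k : ℕ,
          Complex.Gamma (p + r + 1 + 2 * k) /
              (Complex.Gamma ((k : ℂ) + 3 / 2) * Complex.Gamma ((k : ℂ) + p + (b + 2) / 2) *
                Complex.Gamma (p + r + s + 1 + 2 * k)) *
            (-c * x / 4) ^ k := by
  set e : ℕ → ℂ := fun k => (-c * x / 4) ^ k /
    (Complex.Gamma ((k : ℂ) + 3 / 2) * Complex.Gamma ((k : ℂ) + p + (b + 2) / 2))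
  have he : Summable fun k => ‖e k‖ := by
    simpa only [e, add_assoc] using
      summable_norm_pow_div_Gamma_mul_Gamma (-c * x / 4) (3 / 2) (p + (b + 2) / 2)
  have hintegrand : ∀ z ∈ Ioc (0 : ℝ) 1,
      (z : ℂ) ^ (r - 1) * ((1 : ℂ) - z) ^ (s - 1) * struveH p b c ((Real.sqrt x : ℂ) * z) =
        ((Real.sqrt x : ℂ) / 2) ^ (p + 1) *
          ∑' k, e k * betaIntegrand (p + r + 1 + (2 * k : ℝ)) s z :=
    fun z hz => betaIntegrand_mul_struveH_sqrt_mul p b c r s hx hz.1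
  have hterm (k : ℕ) : e k * (Complex.Gamma (p + r + 1 + (2 * k : ℝ)) * Complex.Gamma s /
      Complex.Gamma (p + r + 1 + (2 * k : ℝ) + s)) =
      Complex.Gamma s * (Complex.Gamma (p + r + 1 + 2 * k) /
        (Complex.Gamma ((k : ℂ) + 3 / 2) * Complex.Gamma ((k : ℂ) + p + (b + 2) / 2) *
          Complex.Gamma (p + r + s + 1 + 2 * k)) * (-c * x / 4) ^ k) := by
    rw [show p + r + 1 + ((2 * k : ℝ) : ℂ) + s = p + r + s + 1 + 2 * k by push_cast; ring]
    push_cast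
    ring
  obtain ⟨hint, hsum⟩ := integrableOn_and_hasSum_integral_tsum_betaIntegrand hpr hs he
    (t := fun k => 2 * k) fun k => by positivity
  simp only [hterm] at hsum
  refine ⟨IntegrableOn.congr_fun (hint.const_mul _) (fun z hz => (hintegrand z hz).symm)
      measurableSet_Ioc,
    (summable_mul_left_iff (Complex.Gamma_ne_zero_of_re_pos hs)).1 hsum.summable, ?_⟩
  rw [setIntegral_congr_fun measurableSet_Ioc hintegrand, integral_const_mul, ← hsum.tsum_eq,
    tsum_mul_left, mul_assoc]
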